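/- Let G be a finite multigraph with maximum degree at most Δ, let x, y be vertices at distance t, and consider the random walk on G where at each step an incident edge is chosen uniformly at random. Then the probability that the walk started at x is at y at time t is at most n_G(x,y)/Δ^t ≤ (1/2)^(t-1), where n_G(x,y) is the number of shortest x–y paths, provided additionally that G is Δ-regular. -/
import Mathlib


/-- A multigraph on vertex type `V` with edge type `E`: each edge has an
unordered pair of endpoints (parallel edges and loops are allowed). -/
structure Multigraph (V : Type) (E : Type) where
  ends : E → Sym2 V

namespace Multigraph

variable {V E : Type}

/-- A walk of length `n` from `x` to `y` in a multigraph, recorded by its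
sequence of vertices and edges. -/
@[ext]
structure Walk (G : Multigraph V E) (x y : V) (n : ℕ) where
  vert : Fin (n + 1) → V
  edge : Fin n → E
  vert_zero : vert 0 = x
  vert_last : vert (Fin.last n) = y
  ends_eq : ∀ i : Fin n, G.ends (edge i) = s(vert i.castSucc, vert i.succ)

/-- The graph distance between two vertices (junk value `0` by `sInf` of `∅`
if they are not connected). -/
noncomputable def dist (G : Multigraph V E) (x y : V) : ℕ :=
  sInf {n | Nonempty (G.Walk x y n)}

/-- The degree of a vertex: the number of edges incident to it. -/
noncomputable def degree (G : Multigraph V E) (v : V) : ℕ :=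
  Nat.card {e : E // v ∈ G.ends e}

/-- The number of shortest paths between `x` and `y`: the number of walks
whose length is the distance (such walks are automatically paths). -/
noncomputable def numShortestPaths (G : Multigraph V E) (x y : V) : ℕ :=
  Nat.card (G.Walk x y (G.dist x y))

/-- Distance from a vertex to an edge: the least distance to an endpoint. -/
noncomputable def distToEdge (G : Multigraph V E) (x : V) (e : E) : ℕ :=
  sInf {d | ∃ v ∈ G.ends e, G.dist x v = d}

noncomputable instance {G : Multigraph V E} {x y : V} {n : ℕ} [Fintype V] [Fintype E] :
    Fintype (G.Walk x y n) := by
  classical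
  exact Fintype.ofInjective (fun w => (w.vert, w.edge)) (fun a b h => by
    cases a; cases b; simp_all)

end Multigraph

namespace Multigraph

/-- The distribution of the simple random walk on a Δ-regular multigraph started
at `x`: at each step one of the Δ incident edges is chosen uniformly at random.
`walkProb G Δ x n v` is the probability of being at `v` at time `n`. -/
noncomputable def walkProb {V E : Type} [Fintype V] [Fintype E] [DecidableEq V]
    (G : Multigraph V E) (Δ : ℕ) (x : V) : ℕ → V → ℝ
  | 0, v => if v = x then 1 else 0
  | n + 1, v => ∑ u : V,
      walkProb G Δ x n u * (Nat.card {e : E // G.ends e = s(u, v)} : ℝ) / (Δ : ℝ)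

end Multigraph

namespace Multigraph

variable {V E : Type}

/-- edge multiplicity between two vertices -/
noncomputable def mult (G : Multigraph V E) (u v : V) : ℕ :=
  Nat.card {e : E // G.ends e = s(u, v)}

lemma mult_comm (G : Multigraph V E) (u v : V) : G.mult u v = G.mult v u := by
  unfold mult
  rw [Sym2.eq_swap]

/-- append an edge to a walk -/
def Walk.snoc {G : Multigraph V E} {x u v : V} {n : ℕ}
    (w : G.Walk x u n) (e : E) (h : G.ends e = s(u, v)) : G.Walk x v (n + 1) where
  vert := Fin.snoc w.vert v
  edge := Fin.snoc w.edge e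
  vert_zero := by
    have h0 : (0 : Fin (n + 2)) = Fin.castSucc 0 := rfl
    rw [h0, Fin.snoc_castSucc, w.vert_zero]
  vert_last := Fin.snoc_last _ _
  ends_eq := by
    intro i
    refine Fin.lastCases ?_ ?_ i
    · rw [Fin.snoc_last, Fin.succ_last, Fin.snoc_last, Fin.snoc_castSucc, w.vert_last, h]
    · intro j
      rw [Fin.snoc_castSucc, Fin.succ_castSucc, Fin.snoc_castSucc, Fin.snoc_castSucc]
      exact w.ends_eq j


/-- drop the last edge of a walk -/
def Walk.init {G : Multigraph V E} {x v : V} {n : ℕ} (w : G.Walk x v (n + 1)) :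
    G.Walk x (w.vert (Fin.castSucc (Fin.last n))) n where
  vert := fun i => w.vert i.castSucc
  edge := fun i => w.edge i.castSucc
  vert_zero := by
    show w.vert (Fin.castSucc 0) = x
    rw [Fin.castSucc_zero, w.vert_zero]
  vert_last := rfl
  ends_eq := by
    intro i
    have h2 := w.ends_eq i.castSucc
    rw [Fin.succ_castSucc] at h2
    exact h2

lemma walk_succ_bij (G : Multigraph V E) (x v : V) (n : ℕ) :
    Function.Bijective
      (fun p : Σ u : V, G.Walk x u n × {e : E // G.ends e = s(u, v)} =>
        p.2.1.snoc p.2.2.1 p.2.2.2) := by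
  constructor
  · rintro ⟨u, w, e, he⟩ ⟨u', w', e', he'⟩ h
    simp only at h
    have hv : (w.snoc e he).vert = (w'.snoc e' he').vert := congrArg Walk.vert h
    have he2 : (w.snoc e he).edge = (w'.snoc e' he').edge := congrArg Walk.edge h
    simp only [Walk.snoc] at hv he2
    have hvert : w.vert = w'.vert := by
      funext i
      have := congrFun hv i.castSucc
      rwa [Fin.snoc_castSucc, Fin.snoc_castSucc] at this
    have hu : u = u' := by
      rw [← w.vert_last, ← w'.vert_last, hvert]
    subst hu
    have hedge : w.edge = w'.edge := by
      funext i
      have := congrFun he2 i.castSucc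
      rwa [Fin.snoc_castSucc, Fin.snoc_castSucc] at this
    have hw : w = w' := Walk.ext hvert hedge
    subst hw
    have : e = e' := by
      have := congrFun he2 (Fin.last n)
      rwa [Fin.snoc_last, Fin.snoc_last] at this
    subst this
    rfl
  · intro W
    refine ⟨⟨W.vert (Fin.castSucc (Fin.last n)), W.init, ⟨W.edge (Fin.last n), ?_⟩⟩, ?_⟩
    · rw [W.ends_eq (Fin.last n), Fin.succ_last, W.vert_last]
    · apply Walk.ext
      · funext i
        refine Fin.lastCases ?_ ?_ i
        · show (Fin.snoc _ _ : Fin (n+2) → V) _ = _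
          rw [Fin.snoc_last]
          exact W.vert_last.symm
        · intro j
          show (Fin.snoc _ _ : Fin (n+2) → V) _ = _
          rw [Fin.snoc_castSucc]
          rfl
      · funext i
        refine Fin.lastCases ?_ ?_ i
        · show (Fin.snoc _ _ : Fin (n+1) → E) _ = _
          rw [Fin.snoc_last]
        · intro j
          show (Fin.snoc _ _ : Fin (n+1) → E) _ = _
          rw [Fin.snoc_castSucc]
          rfl

open Classical in
lemma card_walk_zero (G : Multigraph V E) (x v : V) :
    Nat.card (G.Walk x v 0) = if v = x then 1 else 0 := by
  split_ifs with h
  · subst h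
    haveI hu : Unique (G.Walk v v 0) := {
      default := ⟨fun _ => v, Fin.elim0, rfl, rfl, fun i => i.elim0⟩
      uniq := by
        intro w
        apply Walk.ext
        · funext i
          refine Fin.cases ?_ (fun j => j.elim0) i
          rw [w.vert_zero]
        · funext i
          exact i.elim0 }
    exact Nat.card_unique
  · haveI : IsEmpty (G.Walk x v 0) := by
      constructor
      intro w
      exact h (by rw [← w.vert_last, show (Fin.last 0) = 0 from rfl, w.vert_zero])
    exact Nat.card_of_isEmpty

lemma card_walk_succ [Fintype V] [Fintype E] (G : Multigraph V E) (x v : V) (n : ℕ) :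
    Nat.card (G.Walk x v (n + 1)) = ∑ u : V, Nat.card (G.Walk x u n) * G.mult u v := by
  classical
  rw [Nat.card_congr (Equiv.ofBijective _ (walk_succ_bij G x v n)).symm]
  rw [Nat.card_eq_fintype_card, Fintype.card_sigma]
  apply Finset.sum_congr rfl
  intro u _
  rw [Fintype.card_prod]
  simp [mult, Nat.card_eq_fintype_card]


lemma dist_le_of_walk {G : Multigraph V E} {x u : V} {n : ℕ} (w : G.Walk x u n) :
    G.dist x u ≤ n := Nat.sInf_le ⟨w⟩

lemma exists_walk_dist {G : Multigraph V E} {x u : V} {n : ℕ} (w : G.Walk x u n) :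
    Nonempty (G.Walk x u (G.dist x u)) :=
  Nat.sInf_mem (⟨n, ⟨w⟩⟩ : Set.Nonempty {n | Nonempty (G.Walk x u n)})

lemma dist_self (G : Multigraph V E) (x : V) : G.dist x x = 0 :=
  Nat.le_zero.mp (dist_le_of_walk ⟨fun _ => x, Fin.elim0, rfl, rfl, fun i => i.elim0⟩)

open Classical in
lemma sum_mult_le [Fintype E] (G : Multigraph V E) (u : V) (T : Finset V) (hu : u ∉ T) :
    ∑ w ∈ T, G.mult u w ≤ G.degree u := by
  have hm : ∀ w : V, G.mult u w = (Finset.univ.filter (fun e => G.ends e = s(u, w))).card := by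
    intro w
    simp [mult, Nat.card_eq_fintype_card, Fintype.card_subtype]
  have hd : G.degree u = (Finset.univ.filter (fun e : E => u ∈ G.ends e)).card := by
    simp [degree, Nat.card_eq_fintype_card, Fintype.card_subtype]
  rw [hd]
  have hdisj : ∀ w ∈ T, ∀ w' ∈ T, w ≠ w' →
      Disjoint (Finset.univ.filter (fun e => G.ends e = s(u, w)))
        (Finset.univ.filter (fun e => G.ends e = s(u, w'))) := by
    intro w hw w' hw' hne
    rw [Finset.disjoint_left]
    intro e he he'
    simp only [Finset.mem_filter, Finset.mem_univ, true_and] at he he'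
    rw [he] at he'
    rcases Sym2.eq_iff.mp he' with ⟨-, h2⟩ | ⟨h1, -⟩
    · exact hne h2
    · exact hu (h1 ▸ hw')
  calc ∑ w ∈ T, G.mult u w
      = ∑ w ∈ T, (Finset.univ.filter (fun e => G.ends e = s(u, w))).card :=
        Finset.sum_congr rfl (fun w _ => hm w)
    _ = (T.biUnion (fun w => Finset.univ.filter (fun e => G.ends e = s(u, w)))).card :=
        (Finset.card_biUnion hdisj).symm
    _ ≤ _ := by
        apply Finset.card_le_card
        intro e he
        simp only [Finset.mem_biUnion, Finset.mem_filter, Finset.mem_univ, true_and] at he ⊢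
        obtain ⟨w, -, hw⟩ := he
        rw [hw]
        exact Sym2.mem_mk_left u w

lemma walkProb_eq {V E : Type} [Fintype V] [Fintype E] [DecidableEq V]
    (G : Multigraph V E) (Δ : ℕ) (x : V) (hE : Δ = 0 → IsEmpty E) :
    ∀ n v, G.walkProb Δ x n v = (Nat.card (G.Walk x v n) : ℝ) / (Δ : ℝ) ^ n := by
  intro n
  induction n with
  | zero =>
    intro v
    rw [walkProb, card_walk_zero]
    split_ifs <;> simp
  | succ n ih =>
    intro v
    rw [walkProb]
    rcases Nat.eq_zero_or_pos Δ with hΔ | hΔ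
    · subst hΔ
      haveI hEE := hE rfl
      have hcard : Nat.card (G.Walk x v (n + 1)) = 0 := by
        haveI : IsEmpty (G.Walk x v (n + 1)) := ⟨fun w => hEE.false (w.edge 0)⟩
        exact Nat.card_of_isEmpty
      simp [hcard]
    · have hΔ' : (Δ : ℝ) ≠ 0 := Nat.cast_ne_zero.mpr hΔ.ne'
      have hterm : ∀ u : V,
          G.walkProb Δ x n u * (Nat.card {e : E // G.ends e = s(u, v)} : ℝ) / (Δ : ℝ)
            = ((Nat.card (G.Walk x u n) * G.mult u v : ℕ) : ℝ) / (Δ : ℝ) ^ (n + 1) := by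
        intro u
        rw [ih u]
        show _ = ((Nat.card (G.Walk x u n) * Nat.card {e : E // G.ends e = s(u, v)} : ℕ) : ℝ) / _
        push_cast
        rw [pow_succ]
        ring
      rw [Finset.sum_congr rfl (fun u _ => hterm u), ← Finset.sum_div, card_walk_succ]
      push_cast
      rfl


variable {V E : Type}

open Classical in
noncomputable def lvl [Fintype V] (G : Multigraph V E) (x : V) (i : ℕ) : Finset V :=
  Finset.univ.filter (fun u => G.dist x u = i)

open Classical in
lemma mem_lvl [Fintype V] {G : Multigraph V E} {x u : V} {i : ℕ} :
    u ∈ lvl G x i ↔ G.dist x u = i := by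
  simp [lvl]

lemma card_walk_one [Fintype V] [Fintype E] (G : Multigraph V E) (x u : V) :
    Nat.card (G.Walk x u 1) = G.mult x u := by
  classical
  rw [show (1 : ℕ) = 0 + 1 from rfl, card_walk_succ]
  rw [Finset.sum_congr rfl (fun w _ => by rw [card_walk_zero])]
  simp

lemma card_walk_succ_lvl [Fintype V] [Fintype E] (G : Multigraph V E) (x v : V) (i : ℕ)
    (hv : G.dist x v = i + 1) :
    Nat.card (G.Walk x v (i + 1)) = ∑ u ∈ lvl G x i, Nat.card (G.Walk x u i) * G.mult u v := by
  classical
  rw [card_walk_succ]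
  symm
  apply Finset.sum_subset (Finset.subset_univ _)
  intro u _ hu
  by_contra h
  have hN : Nat.card (G.Walk x u i) ≠ 0 := fun h0 => h (by rw [h0, zero_mul])
  have hm : G.mult u v ≠ 0 := fun h0 => h (by rw [h0, mul_zero])
  obtain ⟨⟨w⟩, -⟩ := Nat.card_ne_zero.mp hN
  obtain ⟨⟨e, he⟩, -⟩ := Nat.card_ne_zero.mp hm
  have hle : G.dist x u ≤ i := dist_le_of_walk w
  have hne : G.dist x u ≠ i := fun hh => hu (mem_lvl.mpr hh)
  obtain ⟨w'⟩ := exists_walk_dist w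
  have hv' : G.dist x v ≤ G.dist x u + 1 := dist_le_of_walk (w'.snoc e he)
  omega

lemma B_add_F_le [Fintype V] [Fintype E] (G : Multigraph V E) (Δ : ℕ)
    (hreg : ∀ v : V, G.degree v = Δ) (x u : V) (i : ℕ) (hi : 1 ≤ i)
    (hu : G.dist x u = i) :
    ∑ w ∈ lvl G x (i - 1), G.mult u w + ∑ v ∈ lvl G x (i + 1), G.mult u v ≤ Δ := by
  classical
  have hdisj : Disjoint (lvl G x (i - 1)) (lvl G x (i + 1)) := by
    rw [Finset.disjoint_left]
    intro w hw hw'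
    rw [mem_lvl] at hw hw'
    omega
  rw [← Finset.sum_union hdisj]
  refine le_trans (sum_mult_le G u _ ?_) (le_of_eq (hreg u))
  rw [Finset.mem_union, mem_lvl, mem_lvl]
  omega


open Finset in
lemma energy_le {V E : Type} [Fintype V] [Fintype E] (G : Multigraph V E) (Δ : ℕ)
    (hreg : ∀ v : V, G.degree v = Δ) (x : V) :
    ∀ i : ℕ, 1 ≤ i →
      ∑ u ∈ lvl G x i, (Nat.card (G.Walk x u i) : ℝ) ^ 2 *
          ((Δ : ℝ) - ∑ w ∈ lvl G x (i - 1), (G.mult u w : ℝ))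
        ≤ (Δ : ℝ) * ((Δ : ℝ) ^ 2 / 4) ^ i := by
  intro i
  induction i with
  | zero => intro h; omega
  | succ n ih =>
    intro _
    simp only [Nat.add_sub_cancel]
    rcases Nat.eq_zero_or_pos n with rfl | hn
    · -- base case i = 1
      simp only [zero_add, pow_one]
      have hx0 : x ∈ lvl G x 0 := mem_lvl.mpr (dist_self G x)
      have hxn1 : x ∉ lvl G x 1 := by
        rw [mem_lvl, dist_self]
        omega
      have hterm : ∀ u ∈ lvl G x 1,
          (Nat.card (G.Walk x u 1) : ℝ) ^ 2 * ((Δ : ℝ) - ∑ w ∈ lvl G x 0, (G.mult u w : ℝ))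
            ≤ (G.mult x u : ℝ) * ((Δ : ℝ) ^ 2 / 4) := by
        intro u hu
        rw [card_walk_one]
        have hB : (G.mult x u : ℝ) ≤ ∑ w ∈ lvl G x 0, (G.mult u w : ℝ) := by
          have h1 := Finset.single_le_sum (f := fun w => (G.mult u w : ℝ))
            (fun w _ => by positivity) hx0
          rw [G.mult_comm x u]
          simpa using h1
        have hm0 : (0 : ℝ) ≤ (G.mult x u : ℝ) := by positivity
        nlinarith [sq_nonneg ((Δ : ℝ) - 2 * (G.mult x u : ℝ))]
      calc ∑ u ∈ lvl G x 1, (Nat.card (G.Walk x u 1) : ℝ) ^ 2 *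
              ((Δ : ℝ) - ∑ w ∈ lvl G x 0, (G.mult u w : ℝ))
          ≤ ∑ u ∈ lvl G x 1, (G.mult x u : ℝ) * ((Δ : ℝ) ^ 2 / 4) :=
            Finset.sum_le_sum hterm
        _ = (∑ u ∈ lvl G x 1, (G.mult x u : ℝ)) * ((Δ : ℝ) ^ 2 / 4) := by
            rw [Finset.sum_mul]
        _ ≤ (Δ : ℝ) * ((Δ : ℝ) ^ 2 / 4) := by
            apply mul_le_mul_of_nonneg_right _ (by positivity)
            have hnat : ∑ u ∈ lvl G x 1, G.mult x u ≤ Δ :=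
              le_of_le_of_eq (sum_mult_le G x _ hxn1) (hreg x)
            calc ∑ u ∈ lvl G x 1, (G.mult x u : ℝ)
                = ((∑ u ∈ lvl G x 1, G.mult x u : ℕ) : ℝ) := by push_cast; rfl
              _ ≤ (Δ : ℝ) := Nat.cast_le.mpr hnat
    · -- inductive step
      have ihn := ih hn
      have key : ∀ v ∈ lvl G x (n + 1),
          (Nat.card (G.Walk x v (n + 1)) : ℝ) ^ 2 *
              ((Δ : ℝ) - ∑ w ∈ lvl G x n, (G.mult v w : ℝ))
            ≤ ((Δ : ℝ) ^ 2 / 4) *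
              ∑ u ∈ lvl G x n, (Nat.card (G.Walk x u n) : ℝ) ^ 2 * (G.mult u v : ℝ) := by
        intro v hv
        have hBsym : ∑ w ∈ lvl G x n, (G.mult v w : ℝ) = ∑ u ∈ lvl G x n, (G.mult u v : ℝ) :=
          Finset.sum_congr rfl (fun w _ => by rw [G.mult_comm w v])
        rw [hBsym]
        have hrec : (Nat.card (G.Walk x v (n + 1)) : ℝ)
            = ∑ u ∈ lvl G x n, (Nat.card (G.Walk x u n) : ℝ) * (G.mult u v : ℝ) := by
          rw [card_walk_succ_lvl G x v n (mem_lvl.mp hv)]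
          push_cast
          rfl
        have hQnn : (0 : ℝ) ≤ ∑ u ∈ lvl G x n, (Nat.card (G.Walk x u n) : ℝ) ^ 2 * (G.mult u v : ℝ) :=
          Finset.sum_nonneg (fun u _ => by positivity)
        have hCS : (Nat.card (G.Walk x v (n + 1)) : ℝ) ^ 2
            ≤ (∑ u ∈ lvl G x n, (G.mult u v : ℝ)) *
              ∑ u ∈ lvl G x n, (Nat.card (G.Walk x u n) : ℝ) ^ 2 * (G.mult u v : ℝ) := by
          rw [hrec]
          have h2 := Finset.sum_mul_sq_le_sq_mul_sq (lvl G x n)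
            (fun u => Real.sqrt (G.mult u v))
            (fun u => Real.sqrt (G.mult u v) * (Nat.card (G.Walk x u n) : ℝ))
          have e1 : ∀ u ∈ lvl G x n,
              Real.sqrt (G.mult u v) * (Real.sqrt (G.mult u v) * (Nat.card (G.Walk x u n) : ℝ))
                = (Nat.card (G.Walk x u n) : ℝ) * (G.mult u v : ℝ) := by
            intro u _
            rw [← mul_assoc, Real.mul_self_sqrt (by positivity)]
            ring
          have e2 : ∀ u ∈ lvl G x n,
              (Real.sqrt (G.mult u v)) ^ 2 = (G.mult u v : ℝ) := by
            intro u _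
            exact Real.sq_sqrt (by positivity)
          have e3 : ∀ u ∈ lvl G x n,
              (Real.sqrt (G.mult u v) * (Nat.card (G.Walk x u n) : ℝ)) ^ 2
                = (Nat.card (G.Walk x u n) : ℝ) ^ 2 * (G.mult u v : ℝ) := by
            intro u _
            rw [mul_pow, Real.sq_sqrt (by positivity)]
            ring
          rw [Finset.sum_congr rfl e1, Finset.sum_congr rfl e2, Finset.sum_congr rfl e3] at h2
          exact h2
        have hBle : (∑ u ∈ lvl G x n, (G.mult u v : ℝ)) ≤ (Δ : ℝ) := by
          have hvn : v ∉ lvl G x n := by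
            rw [mem_lvl]
            rw [mem_lvl] at hv
            omega
          have hnat : ∑ u ∈ lvl G x n, G.mult v u ≤ Δ :=
            le_of_le_of_eq (sum_mult_le G v _ hvn) (hreg v)
          calc ∑ u ∈ lvl G x n, (G.mult u v : ℝ)
              = ((∑ u ∈ lvl G x n, G.mult v u : ℕ) : ℝ) := by
                push_cast
                exact Finset.sum_congr rfl (fun w _ => by rw [G.mult_comm w v])
            _ ≤ (Δ : ℝ) := Nat.cast_le.mpr hnat
        have hBnn : (0 : ℝ) ≤ ∑ u ∈ lvl G x n, (G.mult u v : ℝ) :=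
          Finset.sum_nonneg (fun u _ => by positivity)
        calc (Nat.card (G.Walk x v (n + 1)) : ℝ) ^ 2 *
                ((Δ : ℝ) - ∑ u ∈ lvl G x n, (G.mult u v : ℝ))
            ≤ ((∑ u ∈ lvl G x n, (G.mult u v : ℝ)) *
                ∑ u ∈ lvl G x n, (Nat.card (G.Walk x u n) : ℝ) ^ 2 * (G.mult u v : ℝ)) *
                ((Δ : ℝ) - ∑ u ∈ lvl G x n, (G.mult u v : ℝ)) :=
              mul_le_mul_of_nonneg_right hCS (by linarith)
          _ = ((∑ u ∈ lvl G x n, (G.mult u v : ℝ)) *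
                ((Δ : ℝ) - ∑ u ∈ lvl G x n, (G.mult u v : ℝ))) *
                ∑ u ∈ lvl G x n, (Nat.card (G.Walk x u n) : ℝ) ^ 2 * (G.mult u v : ℝ) := by
              ring
          _ ≤ ((Δ : ℝ) ^ 2 / 4) *
                ∑ u ∈ lvl G x n, (Nat.card (G.Walk x u n) : ℝ) ^ 2 * (G.mult u v : ℝ) := by
              apply mul_le_mul_of_nonneg_right _ hQnn
              nlinarith [sq_nonneg ((Δ : ℝ) - 2 * ∑ u ∈ lvl G x n, (G.mult u v : ℝ))]
      calc ∑ v ∈ lvl G x (n + 1), (Nat.card (G.Walk x v (n + 1)) : ℝ) ^ 2 *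
              ((Δ : ℝ) - ∑ w ∈ lvl G x n, (G.mult v w : ℝ))
          ≤ ∑ v ∈ lvl G x (n + 1), ((Δ : ℝ) ^ 2 / 4) *
              ∑ u ∈ lvl G x n, (Nat.card (G.Walk x u n) : ℝ) ^ 2 * (G.mult u v : ℝ) :=
            Finset.sum_le_sum key
        _ = ((Δ : ℝ) ^ 2 / 4) * ∑ v ∈ lvl G x (n + 1),
              ∑ u ∈ lvl G x n, (Nat.card (G.Walk x u n) : ℝ) ^ 2 * (G.mult u v : ℝ) := by
            rw [Finset.mul_sum]
        _ = ((Δ : ℝ) ^ 2 / 4) * ∑ u ∈ lvl G x n, (Nat.card (G.Walk x u n) : ℝ) ^ 2 *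
              ∑ v ∈ lvl G x (n + 1), (G.mult u v : ℝ) := by
            rw [Finset.sum_comm]
            congr 1
            exact Finset.sum_congr rfl (fun u _ => by rw [Finset.mul_sum])
        _ ≤ ((Δ : ℝ) ^ 2 / 4) * ∑ u ∈ lvl G x n, (Nat.card (G.Walk x u n) : ℝ) ^ 2 *
              ((Δ : ℝ) - ∑ w ∈ lvl G x (n - 1), (G.mult u w : ℝ)) := by
            apply mul_le_mul_of_nonneg_left _ (by positivity)
            apply Finset.sum_le_sum
            intro u hu
            apply mul_le_mul_of_nonneg_left _ (sq_nonneg _)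
            have hnat := B_add_F_le G Δ hreg x u n hn (mem_lvl.mp hu)
            have hcast := (Nat.cast_le (α := ℝ)).mpr hnat
            push_cast at hcast
            linarith
        _ ≤ ((Δ : ℝ) ^ 2 / 4) * ((Δ : ℝ) * ((Δ : ℝ) ^ 2 / 4) ^ n) :=
            mul_le_mul_of_nonneg_left ihn (by positivity)
        _ = (Δ : ℝ) * ((Δ : ℝ) ^ 2 / 4) ^ (n + 1) := by
            rw [pow_succ]
            ring


end Multigraph

/-- For the simple random walk on a Δ-regular multigraph, if
d(x,y) = t then the probability of being at y at time t equals n_G(x,y)/Δ^t,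
which is at most (1/2)^(t-1). -/
theorem randomWalk_prob_le {V E : Type} [Fintype V] [Fintype E] [DecidableEq V]
    (G : Multigraph V E) (Δ : ℕ) (hreg : ∀ v : V, G.degree v = Δ)
    (x y : V) (t : ℕ) (ht : G.dist x y = t) :
    G.walkProb Δ x t y = (G.numShortestPaths x y : ℝ) / (Δ : ℝ) ^ t ∧
      (G.numShortestPaths x y : ℝ) / (Δ : ℝ) ^ t ≤ (1 / 2 : ℝ) ^ (t - 1) := by
  classical
  have hE : Δ = 0 → IsEmpty E := by
    intro h0
    constructor
    intro e
    have hmem : (G.ends e).out.1 ∈ G.ends e := Sym2.out_fst_mem _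
    have hpos : Nat.card {e' : E // (G.ends e).out.1 ∈ G.ends e'} ≠ 0 := by
      rw [Nat.card_ne_zero]
      exact ⟨⟨⟨e, hmem⟩⟩, inferInstance⟩
    have hdeg := hreg (G.ends e).out.1
    rw [Multigraph.degree] at hdeg
    omega
  have hN : G.numShortestPaths x y = Nat.card (G.Walk x y t) := by
    unfold Multigraph.numShortestPaths
    rw [ht]
  have h1 : G.walkProb Δ x t y = (G.numShortestPaths x y : ℝ) / (Δ : ℝ) ^ t := by
    rw [Multigraph.walkProb_eq G Δ x hE t y, hN]
  refine ⟨h1, ?_⟩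
  rw [hN]
  rcases t with _ | (_ | s)
  · -- t = 0
    rw [Multigraph.card_walk_zero]
    split_ifs <;> norm_num
  · -- t = 1
    rw [Multigraph.card_walk_one]
    have hxy : x ≠ y := by
      intro h
      rw [h, Multigraph.dist_self] at ht
      omega
    have hle : G.mult x y ≤ Δ := by
      have h2 := Multigraph.sum_mult_le G x {y} (by simpa using hxy)
      rw [Finset.sum_singleton, hreg x] at h2
      exact h2
    rcases Nat.eq_zero_or_pos Δ with rfl | hΔ
    · interval_cases h : G.mult x y <;> norm_num
    · have : (0:ℝ) < (Δ:ℝ) := by positivity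
      rw [pow_one]
      norm_num
      rw [div_le_one this]
      exact_mod_cast hle
  · -- t = s + 2
    have hyl : y ∈ Multigraph.lvl G x (s + 1 + 1) := Multigraph.mem_lvl.mpr ht
    have hrecR : (Nat.card (G.Walk x y (s + 1 + 1)) : ℝ)
        = ∑ u ∈ Multigraph.lvl G x (s + 1),
            (Nat.card (G.Walk x u (s + 1)) : ℝ) * (G.mult u y : ℝ) := by
      rw [Multigraph.card_walk_succ_lvl G x y (s + 1) ht]
      push_cast
      rfl
    set L := Multigraph.lvl G x (s + 1) with hL
    have hQnn : (0 : ℝ) ≤ ∑ u ∈ L, (Nat.card (G.Walk x u (s + 1)) : ℝ) ^ 2 * (G.mult u y : ℝ) :=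
      Finset.sum_nonneg (fun u _ => by positivity)
    have hCS : (Nat.card (G.Walk x y (s + 1 + 1)) : ℝ) ^ 2
        ≤ (∑ u ∈ L, (G.mult u y : ℝ)) *
          ∑ u ∈ L, (Nat.card (G.Walk x u (s + 1)) : ℝ) ^ 2 * (G.mult u y : ℝ) := by
      rw [hrecR]
      have h2 := Finset.sum_mul_sq_le_sq_mul_sq L
        (fun u => Real.sqrt (G.mult u y))
        (fun u => Real.sqrt (G.mult u y) * (Nat.card (G.Walk x u (s + 1)) : ℝ))
      have e1 : ∀ u ∈ L,
          Real.sqrt (G.mult u y) * (Real.sqrt (G.mult u y) * (Nat.card (G.Walk x u (s + 1)) : ℝ))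
            = (Nat.card (G.Walk x u (s + 1)) : ℝ) * (G.mult u y : ℝ) := by
        intro u _
        rw [← mul_assoc, Real.mul_self_sqrt (by positivity)]
        ring
      have e2 : ∀ u ∈ L, (Real.sqrt (G.mult u y)) ^ 2 = (G.mult u y : ℝ) := by
        intro u _
        exact Real.sq_sqrt (by positivity)
      have e3 : ∀ u ∈ L,
          (Real.sqrt (G.mult u y) * (Nat.card (G.Walk x u (s + 1)) : ℝ)) ^ 2
            = (Nat.card (G.Walk x u (s + 1)) : ℝ) ^ 2 * (G.mult u y : ℝ) := by
        intro u _
        rw [mul_pow, Real.sq_sqrt (by positivity)]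
        ring
      rw [Finset.sum_congr rfl e1, Finset.sum_congr rfl e2, Finset.sum_congr rfl e3] at h2
      exact h2
    have hBle : (∑ u ∈ L, (G.mult u y : ℝ)) ≤ (Δ : ℝ) := by
      have hyn : y ∉ L := by
        rw [hL, Multigraph.mem_lvl, ht]
        omega
      have hnat : ∑ u ∈ L, G.mult y u ≤ Δ :=
        le_of_le_of_eq (Multigraph.sum_mult_le G y L hyn) (hreg y)
      calc ∑ u ∈ L, (G.mult u y : ℝ)
          = ((∑ u ∈ L, G.mult y u : ℕ) : ℝ) := by
            push_cast
            exact Finset.sum_congr rfl (fun w _ => by rw [G.mult_comm w y])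
        _ ≤ (Δ : ℝ) := Nat.cast_le.mpr hnat
    have hBnn : (0 : ℝ) ≤ ∑ u ∈ L, (G.mult u y : ℝ) :=
      Finset.sum_nonneg (fun u _ => by positivity)
    have hQle : ∑ u ∈ L, (Nat.card (G.Walk x u (s + 1)) : ℝ) ^ 2 * (G.mult u y : ℝ)
        ≤ (Δ : ℝ) * ((Δ : ℝ) ^ 2 / 4) ^ (s + 1) := by
      refine le_trans ?_ (Multigraph.energy_le G Δ hreg x (s + 1) (by omega))
      apply Finset.sum_le_sum
      intro u hu
      apply mul_le_mul_of_nonneg_left _ (sq_nonneg _)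
      have hnat := Multigraph.B_add_F_le G Δ hreg x u (s + 1) (by omega) (Multigraph.mem_lvl.mp hu)
      have hsingle : G.mult u y ≤ ∑ v ∈ Multigraph.lvl G x (s + 1 + 1), G.mult u v :=
        Finset.single_le_sum (f := fun v => G.mult u v) (fun v _ => Nat.zero_le _) hyl
      have hcast : (G.mult u y : ℝ) + ∑ w ∈ Multigraph.lvl G x (s + 1 - 1), (G.mult u w : ℝ)
          ≤ (Δ : ℝ) := by
        have h3 : G.mult u y + ∑ w ∈ Multigraph.lvl G x (s + 1 - 1), G.mult u w ≤ Δ := by omega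
        exact_mod_cast h3
      linarith
    have hNsq : (Nat.card (G.Walk x y (s + 1 + 1)) : ℝ) ^ 2
        ≤ (Δ : ℝ) * ((Δ : ℝ) * ((Δ : ℝ) ^ 2 / 4) ^ (s + 1)) := by
      calc (Nat.card (G.Walk x y (s + 1 + 1)) : ℝ) ^ 2
          ≤ (∑ u ∈ L, (G.mult u y : ℝ)) *
            ∑ u ∈ L, (Nat.card (G.Walk x u (s + 1)) : ℝ) ^ 2 * (G.mult u y : ℝ) := hCS
        _ ≤ (Δ : ℝ) * ∑ u ∈ L, (Nat.card (G.Walk x u (s + 1)) : ℝ) ^ 2 * (G.mult u y : ℝ) :=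
            mul_le_mul_of_nonneg_right hBle hQnn
        _ ≤ (Δ : ℝ) * ((Δ : ℝ) * ((Δ : ℝ) ^ 2 / 4) ^ (s + 1)) :=
            mul_le_mul_of_nonneg_left hQle (by positivity)
    have hR2 : ((Δ : ℝ) * ((Δ : ℝ) / 2) ^ (s + 1)) ^ 2
        = (Δ : ℝ) * ((Δ : ℝ) * ((Δ : ℝ) ^ 2 / 4) ^ (s + 1)) := by
      rw [mul_pow, ← pow_mul, mul_comm (s + 1) 2, pow_mul]
      norm_num
      ring
    have hNR : (Nat.card (G.Walk x y (s + 1 + 1)) : ℝ) ≤ (Δ : ℝ) * ((Δ : ℝ) / 2) ^ (s + 1) := by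
      have h4 : (Nat.card (G.Walk x y (s + 1 + 1)) : ℝ) ^ 2
          ≤ ((Δ : ℝ) * ((Δ : ℝ) / 2) ^ (s + 1)) ^ 2 := by rw [hR2]; exact hNsq
      have h5 := Real.sqrt_le_sqrt h4
      rwa [Real.sqrt_sq (by positivity), Real.sqrt_sq (by positivity)] at h5
    simp only [Nat.add_sub_cancel]
    rcases Nat.eq_zero_or_pos Δ with rfl | hΔ
    · have hz : (Nat.card (G.Walk x y (s + 1 + 1)) : ℝ) = 0 := by
        have := hNR
        norm_num at this
        have hnn : (0:ℝ) ≤ (Nat.card (G.Walk x y (s + 1 + 1)) : ℝ) := by positivity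
        linarith
      rw [hz]
      norm_num
    · have hΔR : (0:ℝ) < (Δ:ℝ) := by positivity
      rw [div_le_iff₀ (by positivity)]
      have hRform : (Δ : ℝ) * ((Δ : ℝ) / 2) ^ (s + 1)
          = (1 / 2 : ℝ) ^ (s + 1) * (Δ : ℝ) ^ (s + 1 + 1) := by
        rw [div_pow, div_pow, one_pow, pow_succ]
        ring
      linarith [hNR, hRform ▸ hNR]
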